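/- For a ring A the following are equivalent: (i) A has the left lifting property with respect to all surjective ring homomorphisms with nilpotent kernel, i.e. for every surjective ring homomorphism p : X → Y whose kernel is a nilpotent two-sided ideal and every ring homomorphism u : A → Y there exists a ring homomorphism v : A → X with p ∘ v = u; (ii) every surjective ring homomorphism q : B → A whose kernel is a nilpotent two-sided ideal splits, i.e. admits a ring homomorphism section s : A → B with q ∘ s = id_A. (Instance of Lemma 1.9(3): an object is cofibrant iff every deformation onto it is split, in the category of associative rings with shrinking functor s(A,N) = N² and fibrations the surjections.) -/

import Mathlib

/-!
Splittings give liftings by pulling back: given `p : X → Y` and `u : A → Y`, the projection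
`A ×_Y X → A` is again surjective with nilpotent kernel, since its kernel is carried
injectively by the second projection into `ker p`. A section `s` of it yields the lift
`snd ∘ s` of `u`. Conversely, a splitting of `q : B → A` is a lift of `id_A` along `q`.
-/

universe u

/-- The `m`-th power of a subset `U` of a ring `B`: the additive subgroup generated by
all products of `m` elements of `U`. -/
def setPow {B : Type*} [Ring B] (U : Set B) (m : ℕ) : AddSubgroup B :=
  AddSubgroup.closure {x | ∃ l : List B, l.length = m ∧ (∀ y ∈ l, y ∈ U) ∧ x = l.prod}

section SetPow

variable {B C : Type*} [Ring B] [Ring C]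

theorem map_mem_setPow (f : B →+* C) {U : Set B} {V : Set C} (hUV : Set.MapsTo f U V) {m : ℕ}
    {x : B} (hx : x ∈ setPow U m) : f x ∈ setPow V m := by
  suffices setPow U m ≤ (setPow V m).comap f.toAddMonoidHom from this hx
  refine (AddSubgroup.closure_le _).mpr ?_
  rintro _ ⟨l, hl, hlU, rfl⟩
  refine AddSubgroup.subset_closure ⟨l.map f, by rw [List.length_map, hl], ?_, map_list_prod f l⟩
  simp only [List.mem_map, forall_exists_index, and_imp, forall_apply_eq_imp_iff₂]
  exact fun y hy => hUV (hlU y hy)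

theorem setPow_singleton_zero {m : ℕ} (hm : 1 ≤ m) : setPow ({0} : Set B) m = ⊥ := by
  refine eq_bot_iff.mpr ((AddSubgroup.closure_le _).mpr ?_)
  rintro _ ⟨_ | ⟨a, l⟩, hl, hl0, rfl⟩
  · simp only [List.length_nil] at hl
    omega
  · rw [List.prod_cons, hl0 a List.mem_cons_self, zero_mul]
    exact zero_mem _

end SetPow

def HasNilpotentKernel {B C : Type*} [Ring B] [Ring C] (f : B →+* C) : Prop :=
  ∃ m, 1 ≤ m ∧ ∀ x ∈ setPow {b : B | f b = 0} m, x = 0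

namespace HasNilpotentKernel

variable {A X Y : Type*} [Ring A] [Ring X] [Ring Y] {u : A →+* Y} {p : X →+* Y}

theorem pullbackFst (hp : HasNilpotentKernel p) :
    HasNilpotentKernel (u.pullbackFst p) := by
  obtain ⟨m, hm, hpm⟩ := hp
  refine ⟨m, hm, fun z hz => Subtype.ext (Prod.ext ?_ ?_)⟩
  · have hfst := map_mem_setPow (u.pullbackFst p)
      (V := {0}) (fun _ hb => Set.mem_singleton_of_eq hb) hz
    rwa [setPow_singleton_zero hm, AddSubgroup.mem_bot] at hfst
  · refine hpm _ (map_mem_setPow (u.pullbackSnd p) (fun w (hw : u.pullbackFst p w = 0) => ?_) hz)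
    change (p.comp (u.pullbackSnd p)) w = 0
    rw [← RingHom.pullback_comm_sq, RingHom.comp_apply, hw, map_zero]

end HasNilpotentKernel

/-- A ring `A` has the left lifting property with respect to all surjective
ring homomorphisms with nilpotent kernel if and only if every surjective ring homomorphism
onto `A` with nilpotent kernel splits. -/
theorem llp_iff_splittings {A : Type u} [Ring A] :
    (∀ (X Y : Type u) [Ring X] [Ring Y] (p : X →+* Y), Function.Surjective p →
        (∃ m, 1 ≤ m ∧ ∀ x ∈ setPow {x : X | p x = 0} m, x = 0) →
        ∀ u : A →+* Y, ∃ v : A →+* X, p.comp v = u) ↔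
      (∀ (B : Type u) [Ring B] (q : B →+* A), Function.Surjective q →
        (∃ m, 1 ≤ m ∧ ∀ x ∈ setPow {b : B | q b = 0} m, x = 0) →
        ∃ s : A →+* B, q.comp s = RingHom.id A) := by
  refine ⟨fun hlift B _ q hq hnil => hlift B A q hq hnil (RingHom.id A), ?_⟩
  intro hsplit X Y _ _ p hp hnil u
  obtain ⟨s, hs⟩ := hsplit (u.pullback p) (u.pullbackFst p)
    (u.surjective_pullbackFst_of_surjective p hp) (HasNilpotentKernel.pullbackFst hnil)
  refine ⟨(u.pullbackSnd p).comp s, ?_⟩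
  rw [← RingHom.comp_assoc, ← RingHom.pullback_comm_sq, RingHom.comp_assoc, hs, RingHom.comp_id]
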